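/- Among all proposal densities q(x_j | y_{1:j}, x_{j-1}) with support containing the support of p(y_j | y_{1:j-1}, x_j) p(x_j | x_{j-1}), the proposal q*(x_j) = p(x_j | y_{1:j}, x_{j-1}) minimizes the conditional variance of the importance weight w(x_j) = p(y_j | y_{1:j-1}, x_j) p(x_j | x_{j-1}) / q(x_j), and for q = q* this weight is constant in x_j, equal to p(y_j | y_{1:j-1}, x_{j-1}). -/
import Mathlib


open MeasureTheory

/-- Importance sampling optimality of the proposal. Let `f x =
p(y_j | y_{1:j-1}, x) p(x | x_{j-1})` be the unnormalized target with
normalizing constant `Z = ∫ f = p(y_j | y_{1:j-1}, x_{j-1}) > 0`, and let `q`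
be any proposal density whose support contains that of `f`. Then the optimal
proposal `q* = f / Z` (the posterior `p(x_j | y_{1:j}, x_{j-1})`) yields a
weight `w(x) = f x / q*(x)` that is constant, equal to `Z`, on the support of
`f`, and the variance of the importance weight under `q` is at least that
under `q*`. -/
theorem stmt_14 {α : Type*} [MeasurableSpace α] (ν : Measure α)
    (f q : α → ℝ) (hf : ∀ x, 0 ≤ f x) (hq : ∀ x, 0 ≤ q x)
    (hfint : Integrable f ν) (hqint : ∫ x, q x ∂ν = 1)
    (hsupp : ∀ x, f x ≠ 0 → q x ≠ 0)
    (hwint : Integrable (fun x => (f x / q x) ^ 2 * q x) ν)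
    (Z : ℝ) (hZ : Z = ∫ x, f x ∂ν) (hZpos : 0 < Z) :
    (∀ x, f x ≠ 0 → f x / (f x / Z) = Z) ∧
    ((∫ x, (f x / (f x / Z)) ^ 2 * (f x / Z) ∂ν) -
        (∫ x, (f x / (f x / Z)) * (f x / Z) ∂ν) ^ 2 ≤
      (∫ x, (f x / q x) ^ 2 * q x ∂ν) -
        (∫ x, (f x / q x) * q x ∂ν) ^ 2) := by
  have hZne : Z ≠ 0 := hZpos.ne'
  have hconst : ∀ x, f x ≠ 0 → f x / (f x / Z) = Z := by
    intro x hx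
    field_simp
  refine ⟨hconst, ?_⟩
  -- q is integrable (otherwise its integral would be 0, not 1)
  have hqInt : Integrable q ν := by
    by_contra h
    rw [integral_undef h] at hqint
    norm_num at hqint
  -- pointwise identities
  have hfq : ∀ x, (f x / q x) * q x = f x := by
    intro x
    by_cases hqx : q x = 0
    · have hfx : f x = 0 := by
        by_contra hfx
        exact hsupp x hfx hqx
      simp [hqx, hfx]
    · field_simp
  have hstar2 : ∀ x, (f x / (f x / Z)) ^ 2 * (f x / Z) = Z * f x := by
    intro x
    by_cases hfx : f x = 0
    · simp [hfx]
    · rw [hconst x hfx]; field_simp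
  have hstar1 : ∀ x, (f x / (f x / Z)) * (f x / Z) = f x := by
    intro x
    by_cases hfx : f x = 0
    · simp [hfx]
    · rw [hconst x hfx]; field_simp
  -- evaluate the optimal-proposal integrals
  have h1 : (∫ x, (f x / (f x / Z)) ^ 2 * (f x / Z) ∂ν) = Z * Z := by
    calc (∫ x, (f x / (f x / Z)) ^ 2 * (f x / Z) ∂ν) = ∫ x, Z * f x ∂ν := by
            simp_rw [hstar2]
      _ = Z * ∫ x, f x ∂ν := integral_const_mul Z f
      _ = Z * Z := by rw [← hZ]
  have h2 : (∫ x, (f x / (f x / Z)) * (f x / Z) ∂ν) = Z := by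
    simp_rw [hstar1]; rw [← hZ]
  have h3 : (∫ x, (f x / q x) * q x ∂ν) = Z := by
    simp_rw [hfq]; rw [← hZ]
  rw [h1, h2, h3]
  have hsub : Z * Z - Z ^ 2 = 0 := by ring
  rw [hsub]
  -- remaining: 0 ≤ ∫ (f/q)² q - Z²
  have key : 0 ≤ ∫ x, (f x / q x - Z) ^ 2 * q x ∂ν :=
    integral_nonneg fun x => mul_nonneg (sq_nonneg _) (hq x)
  have hexp : ∀ x, (f x / q x - Z) ^ 2 * q x
      = (f x / q x) ^ 2 * q x - 2 * Z * ((f x / q x) * q x) + Z ^ 2 * q x := by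
    intro x; ring
  have hint2 : Integrable (fun x => 2 * Z * ((f x / q x) * q x)) ν := by
    have : Integrable (fun x => 2 * Z * f x) ν := hfint.const_mul _
    simpa only [hfq] using this
  have hint3 : Integrable (fun x => Z ^ 2 * q x) ν := hqInt.const_mul _
  have heq : (∫ x, (f x / q x - Z) ^ 2 * q x ∂ν)
      = (∫ x, (f x / q x) ^ 2 * q x ∂ν) - Z ^ 2 := by
    calc (∫ x, (f x / q x - Z) ^ 2 * q x ∂ν)
        = ∫ x, ((f x / q x) ^ 2 * q x - 2 * Z * ((f x / q x) * q x)
            + Z ^ 2 * q x) ∂ν := by simp_rw [hexp]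
      _ = (∫ x, ((f x / q x) ^ 2 * q x - 2 * Z * ((f x / q x) * q x)) ∂ν)
            + ∫ x, Z ^ 2 * q x ∂ν :=
          integral_add (hwint.sub hint2) hint3
      _ = ((∫ x, (f x / q x) ^ 2 * q x ∂ν)
            - ∫ x, 2 * Z * ((f x / q x) * q x) ∂ν)
            + ∫ x, Z ^ 2 * q x ∂ν := by rw [integral_sub hwint hint2]
      _ = (∫ x, (f x / q x) ^ 2 * q x ∂ν) - Z ^ 2 := by
          have e1 : (∫ x, 2 * Z * ((f x / q x) * q x) ∂ν) = 2 * Z * Z := by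
            simp_rw [hfq]; rw [integral_const_mul, ← hZ]
          have e2 : (∫ x, Z ^ 2 * q x ∂ν) = Z ^ 2 := by
            rw [integral_const_mul, hqint, mul_one]
          rw [e1, e2]; ring
  linarith [key, heq.symm ▸ key]
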